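/- arXiv:2204.12840 — 8 statements merged into one kernel-verified Lean document; each statement's English description precedes it below -/
import Mathlib

section
/- Every 3-uniform hypergraph on 5 vertices with at least 4 hyperedges contains a Berge cycle of length 4, i.e., there exist four distinct vertices v₁, v₂, v₃, v₄ and four distinct hyperedges h₁, h₂, h₃, h₄ with {vᵢ, v_{i+1}} ⊆ hᵢ (indices mod 4). -/
/-!
Having a Berge 4-cycle is monotone in the edge set, so it suffices to treat hypergraphs with
exactly four edges. There are only `C(10, 4) = 210` of these, and once the cycle's edges are
quantified over the edge set rather than over all of `Finset (Fin 5)`, the search is small enough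
for the kernel to check every case.
-/

def BergeCycle (N n : ℕ) (E : Finset (Fin N) → Prop) : Prop :=
  ∃ v : ZMod n → Fin N, Function.Injective v ∧
    ∃ h : ZMod n → Finset (Fin N), Function.Injective h ∧
      ∀ i : ZMod n, E (h i) ∧ v i ∈ h i ∧ v (i + 1) ∈ h i

open Finset

def HasBergeFourCycle {α : Type*} [DecidableEq α] (H : Finset (Finset α)) : Prop :=
  ∃ e₁ ∈ H, ∃ e₂ ∈ H, ∃ e₃ ∈ H, ∃ e₄ ∈ H, [e₁, e₂, e₃, e₄].Nodup ∧
    ∃ a ∈ e₄ ∩ e₁, ∃ b ∈ e₁ ∩ e₂, ∃ c ∈ e₂ ∩ e₃, ∃ d ∈ e₃ ∩ e₄, [a, b, c, d].Nodup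

theorem injective_vecFour_of_nodup {α : Type*} {a b c d : α} (h : [a, b, c, d].Nodup) :
    Function.Injective ![a, b, c, d] :=
  List.nodup_ofFn.mp (by simpa [List.ofFn_succ] using h)

namespace HasBergeFourCycle

theorem mono {α : Type*} [DecidableEq α] {H H' : Finset (Finset α)} (hH : H ⊆ H')
    (h : HasBergeFourCycle H) : HasBergeFourCycle H' := by
  obtain ⟨e₁, h₁, e₂, h₂, e₃, h₃, e₄, h₄, he, hv⟩ := h
  exact ⟨e₁, hH h₁, e₂, hH h₂, e₃, hH h₃, e₄, hH h₄, he, hv⟩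

theorem bergeCycle {N : ℕ} {H : Finset (Finset (Fin N))} (h : HasBergeFourCycle H) :
    BergeCycle N 4 (· ∈ H) := by
  obtain ⟨e₁, h₁, e₂, h₂, e₃, h₃, e₄, h₄, he, a, ha, b, hb, c, hc, d, hd, hv⟩ := h
  obtain ⟨ha₄, ha₁⟩ := mem_inter.mp ha
  obtain ⟨hb₁, hb₂⟩ := mem_inter.mp hb
  obtain ⟨hc₂, hc₃⟩ := mem_inter.mp hc
  obtain ⟨hd₃, hd₄⟩ := mem_inter.mp hd
  refine ⟨![a, b, c, d], injective_vecFour_of_nodup hv, ![e₁, e₂, e₃, e₄],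
    injective_vecFour_of_nodup he, fun i => ?_⟩
  fin_cases i <;> exact ⟨‹_›, ‹_›, ‹_›⟩

end HasBergeFourCycle

theorem hasBergeFourCycle_of_mem_powersetCard :
    ∀ H ∈ (univ.powersetCard 3 : Finset (Finset (Fin 5))).powersetCard 4,
      HasBergeFourCycle H := by
  unfold HasBergeFourCycle
  decide +kernel

/-- Every 3-uniform hypergraph on 5 vertices with at least 4 hyperedges
contains a Berge cycle of length 4. -/
theorem stmt1 (H : Finset (Finset (Fin 5))) (hu : ∀ s ∈ H, s.card = 3)
    (hc : 4 ≤ H.card) : BergeCycle 5 4 (· ∈ H) := by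
  obtain ⟨H', hH'H, hH'card⟩ := exists_subset_card_eq hc
  have hH' : H' ∈ (univ.powersetCard 3).powersetCard 4 :=
    mem_powersetCard.mpr
      ⟨fun s hs => mem_powersetCard.mpr ⟨subset_univ s, hu s (hH'H hs)⟩, hH'card⟩
  exact ((hasBergeFourCycle_of_mem_powersetCard H' hH').mono hH'H).bergeCycle
end

section
/- For every n ≥ 4, R(B³C_n, B³C_n, B³C₃) ≥ n + 1. Specifically, there exists a 3-coloring of the hyperedges of the complete 3-uniform hypergraph on n vertices with colors red, blue, green, containing no red Berge n-cycle, no blue Berge n-cycle, and no green Berge triangle. -/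
/-- For every n ≥ 4 there is a 3-coloring of the triples of an n-set
with no red Berge n-cycle, no blue Berge n-cycle and no green Berge triangle,
so R(B³C_n, B³C_n, B³C₃) ≥ n + 1. -/
theorem stmt4 (n : ℕ) (hn : 4 ≤ n) :
    ∃ c : Finset (Fin n) → Fin 3,
      ¬ BergeCycle n n (fun s => s.card = 3 ∧ c s = 0) ∧
      ¬ BergeCycle n n (fun s => s.card = 3 ∧ c s = 1) ∧
      ¬ BergeCycle n 3 (fun s => s.card = 3 ∧ c s = 2) := by
  haveI : NeZero n := ⟨by omega⟩
  have h01 : (0 : Fin n) ≠ 1 := by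
    intro h
    have := congrArg Fin.val h
    simp [Fin.val_one'] at this
    omega
  refine ⟨fun s => if (0:Fin n) ∈ s ∧ (1:Fin n) ∈ s then 2 else if (0:Fin n) ∈ s then 1 else 0,
    ?_, ?_, ?_⟩
  · rintro ⟨v, hv, h, hh, hE⟩
    have hsurj : Function.Surjective v :=
      ((Fintype.bijective_iff_injective_and_card v).2 ⟨hv, by simp [ZMod.card]⟩).2
    obtain ⟨i, hi⟩ := hsurj 0
    obtain ⟨⟨hc3, hc⟩, hm, _⟩ := hE i
    rw [hi] at hm
    simp only [] at hc
    split_ifs at hc with p q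
    all_goals first
      | exact absurd hc (by decide)
      | exact q hm
  · rintro ⟨v, hv, h, hh, hE⟩
    have hsurj : Function.Surjective v :=
      ((Fintype.bijective_iff_injective_and_card v).2 ⟨hv, by simp [ZMod.card]⟩).2
    obtain ⟨i, hi⟩ := hsurj 1
    obtain ⟨⟨hc3, hc⟩, hm, _⟩ := hE i
    rw [hi] at hm
    simp only [] at hc
    split_ifs at hc with p q
    all_goals first
      | exact absurd hc (by decide)
      | exact p ⟨q, hm⟩
  · rintro ⟨v, hv, h, hh, hE⟩
    have hgreen : ∀ i : ZMod 3, (0:Fin n) ∈ h i ∧ (1:Fin n) ∈ h i := by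
      intro i
      obtain ⟨⟨hc3, hc⟩, _, _⟩ := hE i
      simp only [] at hc
      split_ifs at hc with p q
      · exact p
      · exact absurd hc (by decide)
      · exact absurd hc (by decide)
    have key : ∃ k : ZMod 3, v k ≠ 0 ∧ v k ≠ 1 := by
      by_contra hc
      push_neg at hc
      have hall : ∀ k : ZMod 3, v k = 0 ∨ v k = 1 := fun k => by
        rcases eq_or_ne (v k) 0 with hk | hk
        · exact Or.inl hk
        · exact Or.inr (hc k hk)
      rcases hall 0 with a0 | a0 <;> rcases hall 1 with a1 | a1 <;> rcases hall 2 with a2 | a2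
      · exact absurd (hv (a0.trans a1.symm)) (by decide)
      · exact absurd (hv (a0.trans a1.symm)) (by decide)
      · exact absurd (hv (a0.trans a2.symm)) (by decide)
      · exact absurd (hv (a1.trans a2.symm)) (by decide)
      · exact absurd (hv (a1.trans a2.symm)) (by decide)
      · exact absurd (hv (a0.trans a2.symm)) (by decide)
      · exact absurd (hv (a0.trans a1.symm)) (by decide)
      · exact absurd (hv (a0.trans a1.symm)) (by decide)
    obtain ⟨k, hk0, hk1⟩ := key
    have hcard : ({0, 1, v k} : Finset (Fin n)).card = 3 := by
      rw [Finset.card_insert_of_notMem (by simp [h01, Ne.symm hk0]),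
        Finset.card_insert_of_notMem (by simp [Ne.symm hk1]), Finset.card_singleton]
    have heq : ∀ j : ZMod 3, v k ∈ h j → h j = {0, 1, v k} := by
      intro j hjm
      obtain ⟨⟨hc3, _⟩, _, _⟩ := hE j
      obtain ⟨hj0, hj1⟩ := hgreen j
      refine (Finset.eq_of_subset_of_card_le ?_ (by omega)).symm
      intro x hx
      simp only [Finset.mem_insert, Finset.mem_singleton] at hx
      rcases hx with rfl | rfl | rfl
      · exact hj0
      · exact hj1
      · exact hjm
    have hmk : v k ∈ h k := (hE k).2.1
    have hmk' : v k ∈ h (k - 1) := by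
      have := (hE (k - 1)).2.2
      rwa [sub_add_cancel] at this
    have := hh ((heq k hmk).trans (heq (k - 1) hmk').symm)
    exact absurd (sub_eq_self.mp this.symm) (by decide)
end

section
/- Let H be a 3-uniform hypergraph whose hyperedges are colored with t colors. Suppose there exist m distinct vertices v₁,…,v_m and a color c such that for every pair i < j, at least 3 hyperedges of color c contain both vᵢ and v_j. Then H contains a monochromatic complete Berge hypergraph K_m^{(3)} in color c: there exist pairwise distinct hyperedges h_{ij} (1 ≤ i < j ≤ m), all of color c, with {vᵢ, v_j} ⊆ h_{ij}. -/
/-!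
Index the hyperedges `h_{ij}` by the strictly ordered pairs `i < j` and look for a system of
distinct representatives of the families `T_{ij}` of color-`c` hyperedges through `vᵢ, v_j`.
Each `T_{ij}` has at least 3 members, and a 3-element hyperedge contains only `C(3,2) = 3`
pairs of main vertices, so it lies in at most 3 of the families. Double counting the incidences
between any set of pairs and the union of their families gives Hall's condition.
-/

open Finset Function

theorem Finset.exists_injective_forall_mem_of_card_le_of_degree_le {ι α : Type*} [Fintype ι]
    [DecidableEq α] {T : ι → Finset α} {d : ℕ} (hd : 0 < d) (hT : ∀ i, d ≤ #(T i))
    (hdeg : ∀ i, ∀ a ∈ T i, #{j | a ∈ T j} ≤ d) :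
    ∃ f : ι → α, Injective f ∧ ∀ i, f i ∈ T i := by
  refine (all_card_le_biUnion_card_iff_exists_injective T).mp fun s ↦ ?_
  have hdouble : #s * d ≤ #(s.biUnion T) * d := by
    refine card_mul_le_card_mul (fun i a ↦ a ∈ T i) (fun i hi ↦ ?_) (fun a ha ↦ ?_)
    · convert hT i using 2
      ext a
      simpa [bipartiteAbove] using fun ha ↦ ⟨i, hi, ha⟩
    · obtain ⟨i, -, hai⟩ := mem_biUnion.mp ha
      exact (card_le_card fun j hj ↦ by simpa using (mem_filter.mp hj).2).trans (hdeg i a hai)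
  exact Nat.le_of_mul_le_mul_right hdouble hd

theorem Finset.eq_of_pair_eq_pair_of_lt {ι : Type*} [LinearOrder ι] {p q : ι × ι}
    (hp : p.1 < p.2) (hq : q.1 < q.2) (h : ({p.1, p.2} : Finset ι) = {q.1, q.2}) : p = q := by
  rw [← coe_inj, coe_pair, coe_pair, Set.pair_eq_pair_iff] at h
  rcases h with ⟨h₁, h₂⟩ | ⟨h₁, h₂⟩
  · exact Prod.ext h₁ h₂
  · exact absurd (h₁ ▸ h₂ ▸ hp) hq.not_gt

theorem Finset.card_filter_lt_pairs_le_choose {ι α : Type*} [LinearOrder ι] [Fintype ι]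
    [DecidableEq α] {v : ι → α} (hv : Injective v) (e : Finset α) :
    #{p : {p : ι × ι // p.1 < p.2} | v p.1.1 ∈ e ∧ v p.1.2 ∈ e} ≤ (#e).choose 2 := by
  rw [← card_powersetCard]
  refine card_le_card_of_injOn (fun p ↦ {v p.1.1, v p.1.2}) (fun p hp ↦ ?_) (fun p _ q _ hpq ↦ ?_)
  · obtain ⟨h₁, h₂⟩ := (mem_filter.mp hp).2
    rw [mem_coe, mem_powersetCard, insert_subset_iff, singleton_subset_iff,
      card_pair (hv.ne p.2.ne)]
    exact ⟨⟨h₁, h₂⟩, rfl⟩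
  · have hpq' : ({p.1.1, p.1.2} : Finset ι) = {q.1.1, q.1.2} :=
      image_injective hv (by simpa using hpq)
    exact Subtype.ext (eq_of_pair_eq_pair_of_lt p.2 q.2 hpq')

/-- If every pair among m fixed vertices lies in at least 3 hyperedges of
color k, then there is a monochromatic complete Berge hypergraph of order m
in color k on those vertices. -/
theorem stmt7 {N t m : ℕ} (H : Finset (Finset (Fin N)))
    (hu : ∀ s ∈ H, s.card = 3) (c : Finset (Fin N) → Fin t) (k : Fin t)
    (v : Fin m → Fin N) (hv : Function.Injective v)
    (hdeg : ∀ i j : Fin m, i < j →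
      3 ≤ (H.filter (fun s => c s = k ∧ v i ∈ s ∧ v j ∈ s)).card) :
    ∃ h : Fin m → Fin m → Finset (Fin N),
      (∀ i j : Fin m, i < j →
        h i j ∈ H ∧ c (h i j) = k ∧ v i ∈ h i j ∧ v j ∈ h i j) ∧
      (∀ i j i' j' : Fin m, i < j → i' < j' → h i j = h i' j' →
        i = i' ∧ j = j') := by
  let T : {p : Fin m × Fin m // p.1 < p.2} → Finset (Finset (Fin N)) := fun p ↦
    H.filter (fun s ↦ c s = k ∧ v p.1.1 ∈ s ∧ v p.1.2 ∈ s)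
  have hT_deg : ∀ p, ∀ e ∈ T p, #{q | e ∈ T q} ≤ 3 := fun p e he ↦ by
    have hcard : #e = 3 := hu e (mem_filter.mp he).1
    calc #{q | e ∈ T q}
        ≤ #{q : {p : Fin m × Fin m // p.1 < p.2} | v q.1.1 ∈ e ∧ v q.1.2 ∈ e} :=
          card_le_card fun q hq ↦ by simpa [T] using (mem_filter.mp (mem_filter.mp hq).2).2.2
      _ ≤ (#e).choose 2 := card_filter_lt_pairs_le_choose hv e
      _ = 3 := by rw [hcard]; rfl
  obtain ⟨f, hf_inj, hf_mem⟩ := exists_injective_forall_mem_of_card_le_of_degree_le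
    three_pos (fun p : {p : Fin m × Fin m // p.1 < p.2} ↦ hdeg p.1.1 p.1.2 p.2) hT_deg
  refine ⟨fun i j ↦ if hij : i < j then f ⟨(i, j), hij⟩ else ∅, fun i j hij ↦ ?_,
    fun i j i' j' hij hij' heq ↦ ?_⟩
  · simpa [dif_pos hij, T] using hf_mem ⟨(i, j), hij⟩
  · simp only [dif_pos hij, dif_pos hij'] at heq
    simpa using congrArg Subtype.val (hf_inj heq)
end

section
/- R(B³K₃, B³C₃) = 5, and for every m ≥ 4, R(B³K_m, B³C₃) = m + 1. -/
def BergeK (N m : ℕ) (E : Finset (Fin N) → Prop) : Prop :=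
  ∃ v : Fin m → Fin N, Function.Injective v ∧
    ∃ h : Fin m → Fin m → Finset (Fin N),
      (∀ i j : Fin m, i < j → E (h i j) ∧ v i ∈ h i j ∧ v j ∈ h i j) ∧
      (∀ i j i' j' : Fin m, i < j → i' < j' → h i j = h i' j' → i = i' ∧ j = j')

/-!
Let `E` be a 3-uniform family on `m + 1 ≥ 5` vertices without Berge triangle (the blue edges).
If some pair `{i, j}` spans a full book of `E`-edges, then every `E`-edge contains both `i` and
`j`. Dropping `j`, a pair `{x, y}` avoiding `i` is covered by the red edge `{x, y, j}`, and a pair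
`{i, o}` by the red edge `{i, o, σ o}`, where `σ` has neither fixed points nor 2-cycles.
Otherwise every pair has a red completion, and some pair `{u, b}` lies in no `E`-edge. Dropping
`u`, cover `{x, y}` by `{x, y, u}` if it is red, else by `{x, y, b}` if it is red, else by any red
completion: two pairs receiving the same edge would span a Berge triangle in `E`.
The case `m = 3` follows from `m = 4`. For the lower bounds, colour blue exactly the triples
containing two fixed vertices: every Berge triangle needs a main vertex off the spine, a Berge
`K_m` on `m` vertices joins the two fixed vertices by a red edge, and on 4 vertices only two red
triples remain.
-/

open Finset

theorem Finset.mem_of_insert_eq_insert {α : Type*} [DecidableEq α] {p q : α}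
    {P Q : Finset α} (hp : p ∉ P) (hq : q ∉ Q) (h : insert p P = insert q Q) (hPQ : P ≠ Q) :
    p ∈ Q ∧ q ∈ P := by
  have hpq : p ≠ q := by
    rintro rfl
    exact hPQ (by rw [← erase_insert hp, h, erase_insert hq])
  have hpQ : p ∈ insert q Q := h ▸ mem_insert_self p P
  have hqP : q ∈ insert p P := h ▸ mem_insert_self q Q
  exact ⟨(mem_insert.1 hpQ).resolve_left hpq, (mem_insert.1 hqP).resolve_left hpq.symm⟩

theorem Finset.exists_map_no_short_cycle {α : Type*} [DecidableEq α] (S : Finset α)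
    (hS : 2 < S.card) :
    ∃ σ : α → α, ∀ x ∈ S, σ x ∈ S ∧ σ x ≠ x ∧ σ (σ x) ≠ x := by
  obtain ⟨a, ha, b, hb, c, hc, hab, hac, hbc⟩ := two_lt_card.1 hS
  refine ⟨fun x => if x = a then b else if x = b then c else a, fun x hx => ?_⟩
  by_cases hxa : x = a
  · simp [hxa, hb, hab.symm, hac.symm]
  by_cases hxb : x = b
  · simp [hxb, hc, hab, hab.symm, hbc.symm, hac.symm]
  simp [hxa, hxb, ha, Ne.symm hxa, Ne.symm hxb]

section

variable {N : ℕ} {E : Finset (Fin N) → Prop}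

theorem bergeCycle_three_of_crossing {e f T : Finset (Fin N)} {z x y : Fin N}
    (he : E e) (hf : E f) (hT : E T) (hze : z ∈ e) (hzf : z ∈ f) (hxe : x ∈ e) (hxf : x ∉ f)
    (hyf : y ∈ f) (hye : y ∉ e) (hxT : x ∈ T) (hyT : y ∈ T) : BergeCycle N 3 E := by
  have hzx : z ≠ x := by rintro rfl; exact hxf hzf
  have hzy : z ≠ y := by rintro rfl; exact hye hze
  have hxy : x ≠ y := by rintro rfl; exact hye hxe
  have heT : e ≠ T := by rintro rfl; exact hye hyT
  have hef : e ≠ f := by rintro rfl; exact hxf hxe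
  have hTf : T ≠ f := by rintro rfl; exact hxf hxT
  refine ⟨![z, x, y], ?_, ![e, T, f], ?_, ?_⟩
  · intro a b hab
    fin_cases a <;> fin_cases b <;> first | rfl | simp_all [eq_comm]
  · intro a b hab
    fin_cases a <;> fin_cases b <;> first | rfl | simp_all [eq_comm]
  · intro a
    fin_cases a
    exacts [⟨he, hze, hxe⟩, ⟨hT, hxT, hyT⟩, ⟨hf, hyf, hzf⟩]

theorem exists_uncovered_pair (hN : 4 ≤ N) (hE3 : ∀ s, E s → s.card = 3)
    (hE : ¬BergeCycle N 3 E) :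
    ∃ u b : Fin N, u ≠ b ∧ ∀ s, E s → ¬(u ∈ s ∧ b ∈ s) := by
  by_cases hcross : ∃ e f, E e ∧ E f ∧ e ≠ f ∧ ∃ z, z ∈ e ∧ z ∈ f
  · obtain ⟨e, f, he, hf, hef, z, hze, hzf⟩ := hcross
    have hsub : ∀ {s t}, E s → E t → s ⊆ t → s = t := fun hs ht hst =>
      eq_of_subset_of_card_le hst (by rw [hE3 _ hs, hE3 _ ht])
    obtain ⟨x, hxe, hxf⟩ := not_subset.1 fun h => hef (hsub he hf h)
    obtain ⟨y, hyf, hye⟩ := not_subset.1 fun h => hef (hsub hf he h).symm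
    refine ⟨x, y, by rintro rfl; exact hye hxe, fun T hT hxyT => hE ?_⟩
    exact bergeCycle_three_of_crossing he hf hT hze hzf hxe hxf hyf hye hxyT.1 hxyT.2
  · push Not at hcross
    let u : Fin N := ⟨0, by omega⟩
    by_cases hu : ∃ e, E e ∧ u ∈ e
    · obtain ⟨e, he, hue⟩ := hu
      obtain ⟨b, -, hbe⟩ := exists_mem_notMem_of_card_lt_card
        (s := e) (t := univ) (by simp [hE3 _ he]; omega)
      refine ⟨u, b, by rintro rfl; exact hbe hue, fun T hT ⟨huT, hbT⟩ => ?_⟩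
      exact hcross T e hT he (by rintro rfl; exact hbe hbT) u huT hue
    · push Not at hu
      exact ⟨u, ⟨1, by omega⟩, by simp [u, Fin.ext_iff], fun T hT h => hu T hT h.1⟩

theorem mem_and_mem_of_full_book (hE3 : ∀ s, E s → s.card = 3) (hE : ¬BergeCycle N 3 E)
    {i j : Fin N} (hpair : ∀ z ∉ ({i, j} : Finset (Fin N)), E (insert z {i, j}))
    {T : Finset (Fin N)} (hT : E T) : i ∈ T ∧ j ∈ T := by
  by_contra hij
  have hinter : (T ∩ {i, j}).card < 2 := by
    refine (card_lt_card ?_).trans_le (card_le_two (a := i) (b := j))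
    refine Finset.ssubset_iff_subset_ne.2 ⟨inter_subset_right, fun h => hij ?_⟩
    have hijT := inter_eq_right.1 h
    exact ⟨hijT (by simp), hijT (by simp)⟩
  have hout : 1 < (T \ {i, j}).card := by
    have := card_sdiff_add_card_inter T {i, j}
    rw [hE3 T hT] at this
    omega
  obtain ⟨a, ha, b, hb, hab⟩ := one_lt_card.1 hout
  rw [mem_sdiff] at ha hb
  refine hE (bergeCycle_three_of_crossing (hpair a ha.2) (hpair b hb.2) hT
    (z := i) (by simp) (by simp) (mem_insert_self a _) ?_ (mem_insert_self b _) ?_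
    ha.1 hb.1)
  · exact fun h => (mem_insert.1 h).elim hab ha.2
  · exact fun h => (mem_insert.1 h).elim hab.symm hb.2

theorem bergeK_of_pairs {m : ℕ} (S : Finset (Fin N)) (hS : S.card = m)
    (H : Fin N → Fin N → Finset (Fin N))
    (hH : ∀ x ∈ S, ∀ y ∈ S, x ≠ y → E (H x y) ∧ x ∈ H x y ∧ y ∈ H x y)
    (hinj : ∀ x ∈ S, ∀ y ∈ S, ∀ x' ∈ S, ∀ y' ∈ S, x ≠ y → x' ≠ y' →
      H x y = H x' y' → ({x, y} : Finset (Fin N)) = {x', y'}) :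
    BergeK N m E := by
  set v := S.orderEmbOfFin hS
  have hvS : ∀ i, v i ∈ S := S.orderEmbOfFin_mem hS
  refine ⟨v, v.injective, fun i j => H (v i) (v j),
    fun i j hij => hH _ (hvS i) _ (hvS j) (v.injective.ne hij.ne), fun i j i' j' hij hij' h => ?_⟩
  have hpair := hinj _ (hvS i) _ (hvS j) _ (hvS i') _ (hvS j') (v.injective.ne hij.ne)
    (v.injective.ne hij'.ne) h
  rw [← coe_inj, coe_pair, coe_pair, Set.pair_eq_pair_iff] at hpair
  rcases hpair with ⟨hi, hj⟩ | ⟨hi, hj⟩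
  · exact ⟨v.injective hi, v.injective hj⟩
  · rw [v.injective hi, v.injective hj] at hij
    exact absurd hij' (lt_asymm hij)

variable {u b : Fin N}

theorem exists_third_vertex (huncov : ∀ s, E s → ¬(u ∈ s ∧ b ∈ s)) {P : Finset (Fin N)}
    (huP : u ∉ P) (hP : ∃ z ∉ P, ¬E (insert z P)) :
    ∃ w ∉ P, ¬E (insert w P) ∧ (w ≠ u → E (insert u P)) ∧
      (w ≠ u → w ≠ b → E (insert b P)) := by
  by_cases hu : E (insert u P)
  · by_cases hb : E (insert b P)
    · obtain ⟨z, hzP, hz⟩ := hP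
      exact ⟨z, hzP, hz, fun _ => hu, fun _ _ => hb⟩
    · have hbP : b ∉ P := fun hbP =>
        huncov _ hu ⟨mem_insert_self u P, mem_insert_of_mem hbP⟩
      exact ⟨b, hbP, hb, fun _ => hu, fun _ h => absurd rfl h⟩
  · exact ⟨u, huP, hu, fun h => absurd rfl h, fun h => absurd rfl h⟩

theorem eq_of_insert_third_vertex_eq (hE : ¬BergeCycle N 3 E) (hub : u ≠ b)
    (huncov : ∀ s, E s → ¬(u ∈ s ∧ b ∈ s)) {P Q : Finset (Fin N)} {p q : Fin N}
    (hP : P.card = 2) (huP : u ∉ P) (huQ : u ∉ Q) (hpP : p ∉ P) (hqQ : q ∉ Q)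
    (hpu : p ≠ u → E (insert u P)) (hpb : p ≠ u → p ≠ b → E (insert b P))
    (hqu : q ≠ u → E (insert u Q)) (h : insert p P = insert q Q) : P = Q := by
  by_contra hPQ
  obtain ⟨hpQ, hqP⟩ := mem_of_insert_eq_insert hpP hqQ h hPQ
  have hpu' : p ≠ u := by rintro rfl; exact huQ hpQ
  have hqu' : q ≠ u := by rintro rfl; exact huP hqP
  have hbQ : b ∉ Q := fun hbQ =>
    huncov _ (hqu hqu') ⟨mem_insert_self u Q, mem_insert_of_mem hbQ⟩
  have hpb' : p ≠ b := by rintro rfl; exact hbQ hpQ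
  obtain ⟨r, hrP, hrq⟩ := exists_mem_ne (by omega : 1 < P.card) q
  have hrQ : r ∈ Q := by
    have hr : r ∈ insert q Q := h ▸ mem_insert_of_mem hrP
    exact (mem_insert.1 hr).resolve_left hrq
  -- The Berge triangle `r, q, u` with edges `insert b P`, `insert u P`, `insert u Q`.
  refine hE (bergeCycle_three_of_crossing (hpb hpu' hpb') (hqu hqu') (hpu hpu') (z := r)
    (mem_insert_of_mem hrP) (mem_insert_of_mem hrQ) (mem_insert_of_mem hqP)
    ?_ (mem_insert_self u Q) ?_ (mem_insert_of_mem hqP) (mem_insert_self u P))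
  · exact fun hq => (mem_insert.1 hq).elim hqu' hqQ
  · exact fun hu => (mem_insert.1 hu).elim hub huP

end

theorem bergeK_of_uncovered_pair {m : ℕ} {E : Finset (Fin (m + 1)) → Prop}
    (hE : ¬BergeCycle (m + 1) 3 E) {u b : Fin (m + 1)} (hub : u ≠ b)
    (huncov : ∀ s, E s → ¬(u ∈ s ∧ b ∈ s))
    (hpairs : ∀ x y, x ≠ y →
      ∃ z ∉ ({x, y} : Finset (Fin (m + 1))), ¬E (insert z {x, y})) :
    BergeK (m + 1) m (fun s => s.card = 3 ∧ ¬E s) := by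
  have hthird := fun x y (hxy : x ≠ y) (hu : u ∉ ({x, y} : Finset (Fin (m + 1)))) =>
    exists_third_vertex huncov hu (hpairs x y hxy)
  choose! w hwP hwE hwu hwb using hthird
  have hu : ∀ x ∈ univ.erase u, ∀ y ∈ univ.erase u,
      u ∉ ({x, y} : Finset (Fin (m + 1))) := by
    simp +contextual [eq_comm]
  refine bergeK_of_pairs (univ.erase u) (by simp) (fun x y => insert (w x y) {x, y})
    (fun x hx y hy hxy => ⟨⟨?_, hwE x y hxy (hu x hx y hy)⟩, by simp, by simp⟩)
    (fun x hx y hy x' hx' y' hy' hxy hxy' h => ?_)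
  · rw [card_insert_of_notMem (hwP x y hxy (hu x hx y hy)), card_pair hxy]
  · have huP := hu x hx y hy
    have huQ := hu x' hx' y' hy'
    exact eq_of_insert_third_vertex_eq hE hub huncov (card_pair hxy) huP huQ (hwP x y hxy huP)
      (hwP x' y' hxy' huQ) (hwu x y hxy huP) (hwb x y hxy huP) (hwu x' y' hxy' huQ) h

section Book

variable {N : ℕ} {S : Finset (Fin N)} {i j : Fin N} {σ : Fin N → Fin N}

def bookCover (i j : Fin N) (σ : Fin N → Fin N) (x y : Fin N) : Finset (Fin N) :=
  if x = i then insert (σ y) {i, y} else if y = i then insert (σ x) {i, x} else insert j {x, y}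

theorem bookCover_cases {x y : Fin N} (hx : x ∈ S) (hy : y ∈ S) (hxy : x ≠ y) :
    (∃ o ∈ S.erase i, ({x, y} : Finset (Fin N)) = {i, o} ∧
      bookCover i j σ x y = insert (σ o) {x, y}) ∨
    (i ∉ ({x, y} : Finset (Fin N)) ∧ bookCover i j σ x y = insert j {x, y}) := by
  by_cases hxi : x = i
  · subst hxi
    exact Or.inl ⟨y, mem_erase.2 ⟨hxy.symm, hy⟩, rfl, if_pos rfl⟩
  by_cases hyi : y = i
  · subst hyi
    exact Or.inl ⟨x, mem_erase.2 ⟨hxi, hx⟩, pair_comm _ _,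
      by simp [bookCover, hxi, pair_comm]⟩
  · exact Or.inr ⟨by simp [Ne.symm hxi, Ne.symm hyi], by simp [bookCover, hxi, hyi]⟩

theorem apply_not_mem_pair
    (hσ : ∀ o ∈ S.erase i, σ o ∈ S.erase i ∧ σ o ≠ o ∧ σ (σ o) ≠ o) {o : Fin N}
    (ho : o ∈ S.erase i) : σ o ∉ ({i, o} : Finset (Fin N)) := by
  simp [ne_of_mem_erase (hσ o ho).1, (hσ o ho).2.1]

theorem eq_of_bookCover_eq (hjS : j ∉ S)
    (hσ : ∀ o ∈ S.erase i, σ o ∈ S.erase i ∧ σ o ≠ o ∧ σ (σ o) ≠ o)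
    {x y x' y' : Fin N} (hx : x ∈ S) (hy : y ∈ S) (hx' : x' ∈ S) (hy' : y' ∈ S)
    (hxy : x ≠ y) (hxy' : x' ≠ y')
    (h : bookCover i j σ x y = bookCover i j σ x' y') :
    ({x, y} : Finset (Fin N)) = {x', y'} := by
  have hjP : ∀ {a b}, a ∈ S → b ∈ S → j ∉ ({a, b} : Finset (Fin N)) := fun ha hb => by
    simp only [mem_insert, mem_singleton, not_or]
    exact ⟨fun h => hjS (h ▸ ha), fun h => hjS (h ▸ hb)⟩
  by_contra hPQ
  rcases bookCover_cases (j := j) (σ := σ) hx hy hxy with ⟨o, ho, hxyo, hH⟩ | ⟨-, hH⟩ <;>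
    rcases bookCover_cases (j := j) (σ := σ) hx' hy' hxy' with
      ⟨o', ho', hxyo', hH'⟩ | ⟨-, hH'⟩ <;>
    rw [hH, hH'] at h
  · obtain ⟨hoQ, ho'P⟩ := mem_of_insert_eq_insert (hxyo ▸ apply_not_mem_pair hσ ho)
      (hxyo' ▸ apply_not_mem_pair hσ ho') h hPQ
    rw [hxyo', mem_insert, mem_singleton] at hoQ
    rw [hxyo, mem_insert, mem_singleton] at ho'P
    have hσσ : σ (σ o) = o := by
      rw [hoQ.resolve_left (ne_of_mem_erase (hσ o ho).1),
        ho'P.resolve_left (ne_of_mem_erase (hσ o' ho').1)]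
    exact (hσ o ho).2.2 hσσ
  · exact hjP hx hy
      (mem_of_insert_eq_insert (hxyo ▸ apply_not_mem_pair hσ ho) (hjP hx' hy') h hPQ).2
  · exact hjP hx' hy'
      (mem_of_insert_eq_insert (hjP hx hy) (hxyo' ▸ apply_not_mem_pair hσ ho') h hPQ).1
  · exact hjP hx' hy' (mem_of_insert_eq_insert (hjP hx hy) (hjP hx' hy') h hPQ).1

end Book

theorem bergeK_of_book {m : ℕ} (hm : 4 ≤ m) {E : Finset (Fin (m + 1)) → Prop}
    {i j : Fin (m + 1)} (hij : i ≠ j) (hbook : ∀ s, E s → i ∈ s ∧ j ∈ s) :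
    BergeK (m + 1) m (fun s => s.card = 3 ∧ ¬E s) := by
  set S := univ.erase j
  have hjS : j ∉ S := notMem_erase j univ
  obtain ⟨σ, hσ⟩ := (S.erase i).exists_map_no_short_cycle (by simp [S, hij]; omega)
  refine bergeK_of_pairs S (by simp [S]) (bookCover i j σ) (fun x hx y hy hxy => ?_)
    (fun x hx y hy x' hx' y' hy' hxy hxy' h => eq_of_bookCover_eq hjS hσ hx hy hx' hy' hxy hxy' h)
  rcases bookCover_cases (j := j) (σ := σ) hx hy hxy with ⟨o, ho, hxyo, hH⟩ | ⟨hi, hH⟩ <;>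
    rw [hH]
  · refine ⟨⟨?_, fun hE => ?_⟩, by simp, by simp⟩
    · rw [card_insert_of_notMem (hxyo ▸ apply_not_mem_pair hσ ho), card_pair hxy]
    · have hjH := (hbook _ hE).2
      rw [hxyo, mem_insert, mem_insert, mem_singleton] at hjH
      rcases hjH with hj | hj | hj
      · exact hjS (hj ▸ mem_of_mem_erase (hσ o ho).1)
      · exact hij hj.symm
      · exact hjS (hj ▸ mem_of_mem_erase ho)
  · have hjP : j ∉ ({x, y} : Finset (Fin (m + 1))) := by
      simp [(ne_of_mem_erase hx).symm, (ne_of_mem_erase hy).symm]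
    refine ⟨⟨by rw [card_insert_of_notMem hjP, card_pair hxy], fun hE => hi ?_⟩,
      by simp, by simp⟩
    simpa [hij] using (hbook _ hE).1

theorem bergeK_compl_of_not_bergeCycle {m : ℕ} (hm : 4 ≤ m) {E : Finset (Fin (m + 1)) → Prop}
    (hE3 : ∀ s, E s → s.card = 3) (hE : ¬BergeCycle (m + 1) 3 E) :
    BergeK (m + 1) m (fun s => s.card = 3 ∧ ¬E s) := by
  by_cases hfull : ∃ i j : Fin (m + 1), i ≠ j ∧
      ∀ z ∉ ({i, j} : Finset (Fin (m + 1))), E (insert z {i, j})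
  · obtain ⟨i, j, hij, hfull⟩ := hfull
    exact bergeK_of_book hm hij fun s hs => mem_and_mem_of_full_book hE3 hE hfull hs
  · push Not at hfull
    obtain ⟨u, b, hub, huncov⟩ := exists_uncovered_pair (by omega) hE3 hE
    exact bergeK_of_uncovered_pair hE hub huncov hfull

theorem BergeK.mono {N m : ℕ} {E F : Finset (Fin N) → Prop} (h : BergeK N m E)
    (hEF : ∀ s, E s → F s) : BergeK N m F := by
  obtain ⟨v, hv, H, hH, hinj⟩ := h
  exact ⟨v, hv, H, fun i j hij => (hH i j hij).imp_left (hEF _), hinj⟩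

theorem BergeK.map {N M m : ℕ} {E : Finset (Fin N) → Prop} {F : Finset (Fin M) → Prop}
    (f : Fin N ↪ Fin M) (hEF : ∀ s, E s → F (s.map f)) (h : BergeK N m E) : BergeK M m F := by
  obtain ⟨v, hv, H, hH, hinj⟩ := h
  refine ⟨f ∘ v, f.injective.comp hv, fun i j => (H i j).map f, fun i j hij => ?_,
    fun i j i' j' hij hij' h => hinj i j i' j' hij hij' (map_injective f h)⟩
  obtain ⟨hE, hi, hj⟩ := hH i j hij
  exact ⟨hEF _ hE, mem_map_of_mem f hi, mem_map_of_mem f hj⟩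

theorem BergeCycle.map {N M n : ℕ} {E : Finset (Fin N) → Prop} {F : Finset (Fin M) → Prop}
    (f : Fin N ↪ Fin M) (hEF : ∀ s, E s → F (s.map f)) (h : BergeCycle N n E) :
    BergeCycle M n F := by
  obtain ⟨v, hv, H, hH, hcyc⟩ := h
  refine ⟨f ∘ v, f.injective.comp hv, fun i => (H i).map f,
    (map_injective f).comp hH, fun i => ?_⟩
  obtain ⟨hE, hi, hi'⟩ := hcyc i
  exact ⟨hEF _ hE, mem_map_of_mem f hi, mem_map_of_mem f hi'⟩

theorem BergeK.of_le {N k m : ℕ} {E : Finset (Fin N) → Prop} (hkm : k ≤ m)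
    (h : BergeK N m E) : BergeK N k E := by
  obtain ⟨v, hv, H, hH, hinj⟩ := h
  refine ⟨v ∘ Fin.castLE hkm, hv.comp (Fin.castLE_injective hkm),
    fun i j => H (Fin.castLE hkm i) (Fin.castLE hkm j), fun i j hij => hH _ _ hij,
    fun i j i' j' hij hij' h => ?_⟩
  obtain ⟨hi, hj⟩ := hinj _ _ _ _ hij hij' h
  exact ⟨Fin.castLE_injective hkm hi, Fin.castLE_injective hkm hj⟩

-- The arrow relation `N → (B³K_m, B³C₃)`.
def BergeArrows (N m : ℕ) : Prop :=
  ∀ c : Finset (Fin N) → Bool,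
    BergeK N m (fun s => s.card = 3 ∧ c s = true) ∨
      BergeCycle N 3 (fun s => s.card = 3 ∧ c s = false)

theorem BergeArrows.mono {N M m : ℕ} (h : BergeArrows N m) (hNM : N ≤ M) : BergeArrows M m := by
  intro c
  let f := Fin.castLEEmb hNM
  refine (h fun s => c (s.map f)).imp (BergeK.map f ?_) (BergeCycle.map f ?_) <;>
    exact fun s hs => ⟨by simpa using hs.1, hs.2⟩

theorem BergeArrows.anti {N k m : ℕ} (h : BergeArrows N m) (hkm : k ≤ m) : BergeArrows N k :=
  fun c => (h c).imp_left (BergeK.of_le hkm)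

theorem bergeArrows_succ {m : ℕ} (hm : 4 ≤ m) : BergeArrows (m + 1) m := by
  intro c
  refine or_iff_not_imp_right.2 fun hc => ?_
  refine (bergeK_compl_of_not_bergeCycle hm (fun s hs => hs.1) hc).mono fun s hs => ⟨hs.1, ?_⟩
  simpa [hs.1] using hs.2

theorem not_bergeCycle_of_book {N : ℕ} {E : Finset (Fin N) → Prop} {z₀ z₁ : Fin N}
    (hz : z₀ ≠ z₁) (hE : ∀ s, E s → s.card = 3 ∧ z₀ ∈ s ∧ z₁ ∈ s) :
    ¬BergeCycle N 3 E := by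
  rintro ⟨v, hv, H, hH, hcyc⟩
  -- Some vertex `v k` avoids the spine; both cycle edges at `v k` are then `{v k, z₀, z₁}`.
  obtain ⟨k, hk⟩ : ∃ k, v k ∉ ({z₀, z₁} : Finset (Fin N)) := by
    by_contra! hall
    have := card_le_card_of_injOn (s := univ) v (fun k _ => hall k) hv.injOn
    simp only [card_univ, ZMod.card] at this
    exact absurd (this.trans card_le_two) (by norm_num)
  have hedge : ∀ i, v k ∈ H i → H i = insert (v k) {z₀, z₁} := fun i hki => by
    obtain ⟨h3, h₀, h₁⟩ := hE _ (hcyc i).1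
    refine (eq_of_subset_of_card_le ?_ ?_).symm
    · simp [insert_subset_iff, hki, h₀, h₁]
    · rw [h3, card_insert_of_notMem hk, card_pair hz]
  have := hH ((hedge (k - 1) (by simpa using (hcyc (k - 1)).2.2)).trans (hedge k (hcyc k).2.1).symm)
  exact absurd (sub_eq_self.1 this) (by decide)

theorem not_bergeK_of_uncovered_pair {N : ℕ} {E : Finset (Fin N) → Prop} {z₀ z₁ : Fin N}
    (hz : z₀ ≠ z₁) (hE : ∀ s, E s → ¬(z₀ ∈ s ∧ z₁ ∈ s)) : ¬BergeK N N E := by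
  rintro ⟨v, hv, H, hH, -⟩
  obtain ⟨s, rfl⟩ := Finite.injective_iff_surjective.1 hv z₀
  obtain ⟨t, rfl⟩ := Finite.injective_iff_surjective.1 hv z₁
  rcases lt_or_gt_of_ne (hv.ne_iff.1 hz) with hst | hts
  · obtain ⟨hEst, hs, ht⟩ := hH s t hst
    exact hE _ hEst ⟨hs, ht⟩
  · obtain ⟨hEts, ht, hs⟩ := hH t s hts
    exact hE _ hEts ⟨hs, ht⟩

theorem not_bergeK_four_three :
    ¬BergeK 4 3 (fun s => s.card = 3 ∧ ¬((0 : Fin 4) ∈ s ∧ 1 ∈ s)) := by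
  rintro ⟨v, -, H, hH, hinj⟩
  have hred : ∀ s : Finset (Fin 4), s.card = 3 → ¬(0 ∈ s ∧ 1 ∈ s) →
      s = {0, 2, 3} ∨ s = {1, 2, 3} := by decide
  have hedge : ∀ i j : Fin 3, i < j → H i j = {0, 2, 3} ∨ H i j = {1, 2, 3} :=
    fun i j hij => hred _ (hH i j hij).1.1 (hH i j hij).1.2
  rcases hedge 0 1 (by decide) with h01 | h01 <;> rcases hedge 0 2 (by decide) with h02 | h02 <;>
    rcases hedge 1 2 (by decide) with h12 | h12 <;>
    first
    | exact absurd (hinj 0 1 0 2 (by decide) (by decide) (h01.trans h02.symm)).2 (by decide)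
    | exact absurd (hinj 0 1 1 2 (by decide) (by decide) (h01.trans h12.symm)).1 (by decide)
    | exact absurd (hinj 0 2 1 2 (by decide) (by decide) (h02.trans h12.symm)).1 (by decide)

theorem not_bergeArrows_of_book {N m : ℕ} {z₀ z₁ : Fin N} (hz : z₀ ≠ z₁)
    (hK : ¬BergeK N m (fun s => s.card = 3 ∧ ¬(z₀ ∈ s ∧ z₁ ∈ s))) :
    ¬BergeArrows N m := by
  intro h
  rcases h fun s => decide (¬(z₀ ∈ s ∧ z₁ ∈ s)) with hK' | hC
  · exact hK (hK'.mono fun s hs => ⟨hs.1, of_decide_eq_true hs.2⟩)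
  · exact not_bergeCycle_of_book hz
      (fun s hs => ⟨hs.1, not_not.1 (of_decide_eq_false hs.2)⟩) hC

theorem not_bergeArrows_self {m : ℕ} (hm : 2 ≤ m) : ¬BergeArrows m m := by
  have hz : (⟨0, by omega⟩ : Fin m) ≠ ⟨1, by omega⟩ := by simp
  exact not_bergeArrows_of_book hz (not_bergeK_of_uncovered_pair hz fun s hs => hs.2)

theorem not_bergeArrows_four_three : ¬BergeArrows 4 3 :=
  not_bergeArrows_of_book (by decide) not_bergeK_four_three

theorem isLeast_bergeArrows_three : IsLeast {N | BergeArrows N 3} 5 :=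
  ⟨(bergeArrows_succ le_rfl).anti (by norm_num), fun N hN => by
    by_contra! h
    exact not_bergeArrows_four_three (hN.mono (by omega))⟩

theorem isLeast_bergeArrows {m : ℕ} (hm : 4 ≤ m) : IsLeast {N | BergeArrows N m} (m + 1) :=
  ⟨bergeArrows_succ hm, fun N hN => by
    by_contra! h
    exact not_bergeArrows_self (by omega) (hN.mono (by omega))⟩

/-- R(B³K₃, B³C₃) = 5, and R(B³K_m, B³C₃) = m + 1 for m ≥ 4.
Red hyperedges are those with `c s = true`, blue those with `c s = false`. -/
theorem stmt8 :
    IsLeast {N : ℕ | ∀ c : Finset (Fin N) → Bool,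
      BergeK N 3 (fun s => s.card = 3 ∧ c s = true) ∨
      BergeCycle N 3 (fun s => s.card = 3 ∧ c s = false)} 5 ∧
    ∀ m : ℕ, 4 ≤ m →
      IsLeast {N : ℕ | ∀ c : Finset (Fin N) → Bool,
        BergeK N m (fun s => s.card = 3 ∧ c s = true) ∨
        BergeCycle N 3 (fun s => s.card = 3 ∧ c s = false)} (m + 1) :=
  ⟨isLeast_bergeArrows_three, fun _ hm => isLeast_bergeArrows hm⟩
end

section
/- For n ∈ {4, 5} and m ≥ n, R(B³K_m, B³C_n) ≥ m + 1. Specifically, there is a red/blue coloring of the hyperedges of the complete 3-uniform hypergraph on m vertices with no red Berge-K_m and no blue Berge cycle of length n. -/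
lemma stmt9_aux (n m : ℕ) (hm : 4 ≤ m)
    (h01 : (0 : ZMod n) ≠ 1) (h02 : (0 : ZMod n) ≠ 2) (h12 : (1 : ZMod n) ≠ 2)
    (h10 : (1 : ZMod n) ≠ 0) :
    ∃ c : Finset (Fin m) → Bool,
      ¬ BergeK m m (fun s => s.card = 3 ∧ c s = true) ∧
      ¬ BergeCycle m n (fun s => s.card = 3 ∧ c s = false) := by
  set a : Fin m := ⟨0, by omega⟩ with ha
  set b : Fin m := ⟨1, by omega⟩ with hb
  have hab : a ≠ b := by simp [ha, hb, Fin.ext_iff]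
  refine ⟨fun s => !(decide (a ∈ s ∧ b ∈ s)), ?_, ?_⟩
  · rintro ⟨v, hv, h, hprop, -⟩
    have hsurj : Function.Surjective v := Finite.surjective_of_injective hv
    obtain ⟨i, hi⟩ := hsurj a
    obtain ⟨j, hj⟩ := hsurj b
    have hij : i ≠ j := fun e => hab (hi ▸ hj ▸ e ▸ rfl)
    rcases lt_or_gt_of_ne hij with hlt | hlt
    · obtain ⟨⟨-, hc⟩, hvi, hvj⟩ := hprop i j hlt
      simp only [Bool.not_eq_true', decide_eq_false_iff_not] at hc
      exact hc ⟨hi ▸ hvi, hj ▸ hvj⟩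
    · obtain ⟨⟨-, hc⟩, hvj, hvi⟩ := hprop j i hlt
      simp only [Bool.not_eq_true', decide_eq_false_iff_not] at hc
      exact hc ⟨hi ▸ hvi, hj ▸ hvj⟩
  · rintro ⟨v, hv, h, hh, hprop⟩
    have hmem : ∀ i, a ∈ h i ∧ b ∈ h i := by
      intro i
      have := (hprop i).1.2
      simpa using this
    by_cases hall : ∀ i, v i = a ∨ v i = b
    · have d01 : v (0 : ZMod n) ≠ v 1 := fun e => h01 (hv e)
      have d02 : v (0 : ZMod n) ≠ v 2 := fun e => h02 (hv e)
      have d12 : v (1 : ZMod n) ≠ v 2 := fun e => h12 (hv e)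
      rcases hall 0 with e0 | e0 <;> rcases hall 1 with e1 | e1 <;>
        rcases hall 2 with e2 | e2 <;> simp_all
    · push_neg at hall
      obtain ⟨i, hia, hib⟩ := hall
      have key : ∀ j, v i ∈ h j → h j = {a, b, v i} := by
        intro j hj
        have hsub : ({a, b, v i} : Finset (Fin m)) ⊆ h j := by
          intro x hx
          simp only [Finset.mem_insert, Finset.mem_singleton] at hx
          rcases hx with rfl | rfl | rfl
          · exact (hmem j).1
          · exact (hmem j).2
          · exact hj
        have hcard : ({a, b, v i} : Finset (Fin m)).card = 3 := by
          rw [Finset.card_insert_of_notMem (by simp [hab, Ne.symm hia]),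
            Finset.card_insert_of_notMem (by simp [Ne.symm hib])]
          simp
        exact (Finset.eq_of_subset_of_card_le hsub (by rw [hcard, (hprop j).1.1])).symm
      have e1 : h (i - 1) = {a, b, v i} := by
        have := (hprop (i - 1)).2.2
        rw [sub_add_cancel] at this
        exact key _ this
      have e2 : h i = {a, b, v i} := key _ (hprop i).2.1
      have : i - 1 = i := hh (e1.trans e2.symm)
      rw [sub_eq_self] at this
      exact h10 this

/-- For n ∈ {4,5} and m ≥ n there is a red/blue coloring of the triples of
an m-set with no red Berge-K_m and no blue Berge n-cycle, so
R(B³K_m, B³C_n) ≥ m + 1. -/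
theorem stmt9 (n m : ℕ) (hn : n = 4 ∨ n = 5) (hm : n ≤ m) :
    ∃ c : Finset (Fin m) → Bool,
      ¬ BergeK m m (fun s => s.card = 3 ∧ c s = true) ∧
      ¬ BergeCycle m n (fun s => s.card = 3 ∧ c s = false) := by
  rcases hn with rfl | rfl <;>
    exact stmt9_aux _ _ (by omega) (by decide) (by decide) (by decide) (by decide)
end

section
/- For m ≥ n ≥ 6 and m ≥ 11, R(B³K_m, B³C_n) ≥ m + ⌊(n−1)/2⌋ − 1. Specifically, on m + ⌊(n−1)/2⌋ − 2 vertices partitioned into A of size ⌊(n−1)/2⌋ and B of size m − 2, coloring red all triples meeting B in at least two points and blue the rest yields no red Berge-K_m and no blue Berge n-cycle. -/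
/-!
Split the vertices into a part `B` of size `m - 2` and its complement `A` of size
`⌊(n - 1)/2⌋`, and colour a triple red when it meets `B` in at least two points.
A red triple has at most one vertex in `A`, so at most one main vertex of a red Berge-`K_m`
lies in `A` and the clique has at most `|B| + 1 = m - 1` main vertices.
A blue triple has at most one vertex in `B`, so no two consecutive core vertices of a blue
Berge cycle lie in `B`; hence at least half of its `n` core vertices lie in `A`, which would
need `2 ⌊(n - 1)/2⌋ ≥ n`.
-/

open Finset

def meetsTwiceColoring {α : Type*} [DecidableEq α] (B s : Finset α) : Bool :=
  decide (2 ≤ #(s ∩ B))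

theorem Finset.card_sdiff_le_one_of_card_eq_three {α : Type*} [DecidableEq α] {s B : Finset α}
    (hs : #s = 3) (hB : 2 ≤ #(s ∩ B)) : #(s \ B) ≤ 1 := by
  have := card_sdiff_add_card_inter s B
  omega

theorem BergeK.le_card_add_one {N m : ℕ} {E : Finset (Fin N) → Prop} (B : Finset (Fin N))
    (hE : ∀ e, E e → #(e \ B) ≤ 1) (hK : BergeK N m E) : m ≤ #B + 1 := by
  obtain ⟨v, hv, h, hh, -⟩ := hK
  have hout : #{i | v i ∉ B} ≤ 1 := by
    refine card_le_one.mpr fun i hi j hj => by_contra fun hij => ?_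
    simp only [mem_filter, mem_univ, true_and] at hi hj
    wlog hlt : i < j generalizing i j
    · exact this j i (Ne.symm hij) hj hi (lt_of_le_of_ne (not_lt.mp hlt) (Ne.symm hij))
    obtain ⟨hEij, hvi, hvj⟩ := hh i j hlt
    have : 1 < #(h i j \ B) :=
      one_lt_card.mpr ⟨v i, mem_sdiff.mpr ⟨hvi, hi⟩, v j, mem_sdiff.mpr ⟨hvj, hj⟩, hv.ne hij⟩
    exact (hE _ hEij).not_gt this
  have hin : #{i | v i ∈ B} ≤ #B :=
    card_le_card_of_injOn v (fun i hi => by simpa using hi) hv.injOn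
  have hsplit := card_filter_add_card_filter_not (s := univ) (p := fun i : Fin m => v i ∈ B)
  rw [card_univ, Fintype.card_fin] at hsplit
  omega

theorem BergeCycle.le_two_mul_card_compl {N n : ℕ} {E : Finset (Fin N) → Prop}
    (B : Finset (Fin N)) (hn : 2 ≤ n) (hE : ∀ e, E e → #(e ∩ B) ≤ 1) (hC : BergeCycle N n E) :
    n ≤ 2 * #Bᶜ := by
  obtain ⟨v, hv, h, -, hh⟩ := hC
  have : NeZero n := ⟨by omega⟩
  have : Fact (1 < n) := ⟨by omega⟩
  have hnext : ∀ i, v i ∈ B → v (i + 1) ∉ B := by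
    intro i hi hi'
    obtain ⟨hEi, hvi, hvi'⟩ := hh i
    have hne : v i ≠ v (i + 1) := fun e => one_ne_zero (left_eq_add.mp (hv e))
    have : 1 < #(h i ∩ B) :=
      one_lt_card.mpr ⟨v i, mem_inter.mpr ⟨hvi, hi⟩, v (i + 1), mem_inter.mpr ⟨hvi', hi'⟩, hne⟩
    exact (hE _ hEi).not_gt this
  set S : Finset (ZMod n) := {i | v i ∈ B}
  have hS : #S ≤ #Sᶜ :=
    card_le_card_of_injOn (· + 1) (fun i hi => by simpa [S] using hnext i (by simpa [S] using hi))
      (add_left_injective 1).injOn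
  have hSc : #Sᶜ ≤ #Bᶜ :=
    card_le_card_of_injOn v (fun i hi => by simpa [S] using hi) hv.injOn
  have hsplit : #S + #Sᶜ = n := by rw [card_add_card_compl, ZMod.card]
  omega

theorem stmt13_general (m n : ℕ) (hn : 6 ≤ n) (hm : 11 ≤ m) :
    ∃ c : Finset (Fin (m + (n - 1) / 2 - 2)) → Bool,
      ¬ BergeK (m + (n - 1) / 2 - 2) m (fun s => s.card = 3 ∧ c s = true) ∧
      ¬ BergeCycle (m + (n - 1) / 2 - 2) n (fun s => s.card = 3 ∧ c s = false) := by
  obtain ⟨B, -, hB⟩ := exists_subset_card_eq (s := (univ : Finset (Fin (m + (n - 1) / 2 - 2))))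
    (n := m - 2) (by rw [card_univ, Fintype.card_fin]; omega)
  have hA : #Bᶜ = (n - 1) / 2 := by rw [card_compl, Fintype.card_fin, hB]; omega
  refine ⟨meetsTwiceColoring B, fun hK => ?_, fun hC => ?_⟩
  · have hclique := hK.le_card_add_one B fun e ⟨he, hred⟩ =>
      card_sdiff_le_one_of_card_eq_three he (by simpa [meetsTwiceColoring] using hred)
    omega
  · have hcycle := hC.le_two_mul_card_compl B (by omega) fun e ⟨_, hblue⟩ => by
      simpa [meetsTwiceColoring] using hblue
    omega

/-- For m ≥ n ≥ 6 and m ≥ 11 there is a red/blue coloring of the triples of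
a set of m + ⌊(n−1)/2⌋ − 2 vertices with no red Berge-K_m and no blue Berge
n-cycle, so R(B³K_m, B³C_n) ≥ m + ⌊(n−1)/2⌋ − 1. -/
theorem stmt13 (m n : ℕ) (hn : 6 ≤ n) (hnm : n ≤ m) (hm : 11 ≤ m) :
    ∃ c : Finset (Fin (m + (n - 1) / 2 - 2)) → Bool,
      ¬ BergeK (m + (n - 1) / 2 - 2) m (fun s => s.card = 3 ∧ c s = true) ∧
      ¬ BergeCycle (m + (n - 1) / 2 - 2) n (fun s => s.card = 3 ∧ c s = false) :=
  stmt13_general m n hn hm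
end

section
/- Let H be a red/blue hyperedge-colored complete 3-uniform hypergraph and let C be a blue Berge cycle of maximum length ℓ ≥ 5 in H, with core vertices v₁,…,v_ℓ and hyperedges h₁,…,h_ℓ. Suppose u is a vertex not on the core of C, v is any other vertex, and at least 3 blue hyperedges contain both u and v while no red hyperedge contains both u and v. Then H contains a blue Berge cycle of length ℓ + 1, contradicting maximality. In particular, for every vertex u outside the core of a maximum blue Berge cycle of length ≥ 5 and every other vertex v, if at least 3 hyperedges contain {u,v}, then at least one hyperedge containing {u,v} is red. -/
lemma castinj15 {ℓ a b : ℕ} (ha : a < ℓ) (hb : b < ℓ)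
    (h : (a : ZMod ℓ) = (b : ZMod ℓ)) : a = b := by
  have := congrArg ZMod.val h
  rwa [ZMod.val_cast_of_lt ha, ZMod.val_cast_of_lt hb] at this

lemma castzero15 {ℓ k : ℕ} (hk : k < ℓ) (h : (k : ZMod ℓ) = 0) : k = 0 :=
  castinj15 hk (by omega) (by simpa using h)

/-- If `C` is a blue Berge cycle of maximum length ℓ ≥ 5 in a red/blue colored
complete 3-uniform hypergraph, `u` is a vertex off the core of `C`, `w ≠ u` is
any other vertex, and at least 3 triples contain both `u` and `w`, then some
triple containing `u` and `w` is red.  (Blue is `false`, red is `true`.) -/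
theorem stmt15 {N ℓ : ℕ} (hℓ : 5 ≤ ℓ) (c : Finset (Fin N) → Bool)
    (v : ZMod ℓ → Fin N) (h : ZMod ℓ → Finset (Fin N))
    (hvinj : Function.Injective v) (hhinj : Function.Injective h)
    (hcyc : ∀ i : ZMod ℓ,
      (h i).card = 3 ∧ c (h i) = false ∧ v i ∈ h i ∧ v (i + 1) ∈ h i)
    (hmax : ¬ BergeCycle N (ℓ + 1) (fun s => s.card = 3 ∧ c s = false))
    (u w : Fin N) (hu : ∀ i : ZMod ℓ, u ≠ v i) (huw : u ≠ w)
    (hthree : 3 ≤ (Finset.univ.filter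
      (fun s : Finset (Fin N) => s.card = 3 ∧ u ∈ s ∧ w ∈ s)).card) :
    ∃ s : Finset (Fin N), s.card = 3 ∧ u ∈ s ∧ w ∈ s ∧ c s = true := by
  haveI : NeZero ℓ := ⟨by omega⟩
  haveI : NeZero (ℓ + 1) := ⟨by omega⟩
  haveI : Fact (1 < ℓ + 1) := ⟨by omega⟩
  by_contra hcon
  push_neg at hcon
  have hblue : ∀ s : Finset (Fin N), s.card = 3 → u ∈ s → w ∈ s → c s = false := by
    intro s h1 h2 h3
    have := hcon s h1 h2 h3
    simpa using this
  -- choose the cut point t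
  obtain ⟨t, hw0, hw1, hw2, hw3⟩ :
      ∃ t : ZMod ℓ, w ≠ v (t - 1) ∧ w ≠ v t ∧ w ≠ v (t + 1) ∧ w ≠ v (t + 2) := by
    by_cases hs : ∃ s, v s = w
    · obtain ⟨s, rfl⟩ := hs
      refine ⟨s - 3, fun hh => ?_, fun hh => ?_, fun hh => ?_, fun hh => ?_⟩
      · have h1 := hvinj hh
        have h4 : ((4 : ℕ) : ZMod ℓ) = 0 := by push_cast; linear_combination h1
        have := castzero15 (by omega) h4; omega
      · have h1 := hvinj hh
        have h4 : ((3 : ℕ) : ZMod ℓ) = 0 := by push_cast; linear_combination h1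
        have := castzero15 (by omega) h4; omega
      · have h1 := hvinj hh
        have h4 : ((2 : ℕ) : ZMod ℓ) = 0 := by push_cast; linear_combination h1
        have := castzero15 (by omega) h4; omega
      · have h1 := hvinj hh
        have h4 : ((1 : ℕ) : ZMod ℓ) = 0 := by push_cast; linear_combination h1
        have := castzero15 (by omega) h4; omega
    · exact ⟨0, fun hh => hs ⟨_, hh.symm⟩, fun hh => hs ⟨_, hh.symm⟩,
        fun hh => hs ⟨_, hh.symm⟩, fun hh => hs ⟨_, hh.symm⟩⟩
  -- re-index the cycle so the cut point is 0
  set V : ZMod ℓ → Fin N := fun i => v (i + t) with hVdef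
  set H : ZMod ℓ → Finset (Fin N) := fun i => h (i + t) with hHdef
  have hVinj : Function.Injective V := fun a b hab => by
    have := hvinj hab; exact add_right_cancel this
  have hHinj : Function.Injective H := fun a b hab => by
    have := hhinj hab; exact add_right_cancel this
  have hC : ∀ i, (H i).card = 3 ∧ c (H i) = false ∧ V i ∈ H i ∧ V (i + 1) ∈ H i := by
    intro i
    have := hcyc (i + t)
    have he : i + t + 1 = i + 1 + t := by ring
    rw [he] at this
    exact this
  have huV : ∀ i, u ≠ V i := fun i => hu _
  have hwV0 : w ≠ V 0 := by simpa [hVdef] using hw1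
  have hwVm1 : w ≠ V (-1) := by
    have : (-1 : ZMod ℓ) + t = t - 1 := by ring
    simpa [hVdef, this] using hw0
  have hwV1 : w ≠ V 1 := by
    have : (1 : ZMod ℓ) + t = t + 1 := by ring
    simpa [hVdef, this] using hw2
  have hwV2 : w ≠ V 2 := by
    have : (2 : ZMod ℓ) + t = t + 2 := by ring
    simpa [hVdef, this] using hw3
  have hone : (1 : ZMod ℓ) ≠ 0 := by
    intro hh
    have : ((1 : ℕ) : ZMod ℓ) = 0 := by simpa using hh
    have := castzero15 (by omega) this; omega
  have hV01 : V 0 ≠ V 1 := by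
    intro hh; exact hone (by simpa using (hVinj hh).symm)
  -- the two new hyperedges
  set e1 : Finset (Fin N) := {u, w, V 0} with he1def
  set e2 : Finset (Fin N) := {u, w, V 1} with he2def
  have hue1 : u ∈ e1 := by simp [he1def]
  have hwe1 : w ∈ e1 := by simp [he1def]
  have hue2 : u ∈ e2 := by simp [he2def]
  have hwe2 : w ∈ e2 := by simp [he2def]
  have hcard1 : e1.card = 3 := by
    rw [he1def, Finset.card_insert_of_notMem (by simp [huw, huV 0]),
      Finset.card_insert_of_notMem (by simp [hwV0]), Finset.card_singleton]
  have hcard2 : e2.card = 3 := by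
    rw [he2def, Finset.card_insert_of_notMem (by simp [huw, huV 1]),
      Finset.card_insert_of_notMem (by simp [hwV1]), Finset.card_singleton]
  have hblue1 : c e1 = false := hblue e1 hcard1 hue1 hwe1
  have hblue2 : c e2 = false := hblue e2 hcard2 hue2 hwe2
  have hVne : ∀ a b : ZMod ℓ, a ≠ b → V a ≠ V b := fun a b hab hh => hab (hVinj hh)
  have he12 : e1 ≠ e2 := by
    intro heq
    have : V 0 ∈ e2 := heq ▸ (by simp [he1def])
    rw [he2def] at this
    simp only [Finset.mem_insert, Finset.mem_singleton] at this
    rcases this with h2 | h2 | h2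
    · exact huV 0 h2.symm
    · exact hwV0 h2.symm
    · exact hV01 h2
  have he1H : ∀ j, e1 ≠ H j := by
    intro j heq
    obtain ⟨_, _, hj1, hj2⟩ := hC j
    rw [← heq, he1def] at hj1 hj2
    simp only [Finset.mem_insert, Finset.mem_singleton] at hj1 hj2
    rcases hj1 with h1 | h1 | h1
    · exact huV j h1.symm
    · rcases hj2 with h2 | h2 | h2
      · exact huV (j + 1) h2.symm
      · have := hVinj (h1.trans h2.symm)
        have : (1 : ZMod ℓ) = 0 := by linear_combination -this
        exact hone this
      · have hj0 : j = -1 := by have := hVinj h2; linear_combination this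
        exact hwVm1 (hj0 ▸ h1.symm)
    · have hj0 : j = 0 := hVinj h1
      rcases hj2 with h2 | h2 | h2
      · exact huV (j + 1) h2.symm
      · rw [hj0, zero_add] at h2
        exact hwV1 h2.symm
      · have := hVinj h2
        rw [hj0] at this
        have : (1 : ZMod ℓ) = 0 := by linear_combination this
        exact hone this
  have he2H : ∀ j, e2 ≠ H j := by
    intro j heq
    obtain ⟨_, _, hj1, hj2⟩ := hC j
    rw [← heq, he2def] at hj1 hj2
    simp only [Finset.mem_insert, Finset.mem_singleton] at hj1 hj2
    rcases hj1 with h1 | h1 | h1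
    · exact huV j h1.symm
    · rcases hj2 with h2 | h2 | h2
      · exact huV (j + 1) h2.symm
      · have := hVinj (h1.trans h2.symm)
        have : (1 : ZMod ℓ) = 0 := by linear_combination -this
        exact hone this
      · have hj0 : j = 0 := by have := hVinj h2; linear_combination this
        exact hwV0 (hj0 ▸ h1.symm)
    · have hj0 : j = 1 := hVinj h1
      rcases hj2 with h2 | h2 | h2
      · exact huV (j + 1) h2.symm
      · rw [hj0] at h2
        exact hwV2 (by simpa [one_add_one_eq_two] using h2.symm)
      · have := hVinj h2
        rw [hj0] at this
        have : (1 : ZMod ℓ) = 0 := by linear_combination this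
        exact hone this
  -- facts about ZMod (ℓ+1) values
  have hvallt : ∀ i : ZMod (ℓ + 1), i.val < ℓ + 1 := fun i => ZMod.val_lt i
  have hvaleq : ∀ a b : ZMod (ℓ + 1), a.val = b.val → a = b :=
    fun a b hab => ZMod.val_injective (ℓ + 1) hab
  have hsucc : ∀ i : ZMod (ℓ + 1), (i + 1).val = if i.val = ℓ then 0 else i.val + 1 := by
    intro i
    rw [ZMod.val_add, ZMod.val_one]
    split_ifs with hh
    · rw [hh, Nat.mod_self]
    · exact Nat.mod_eq_of_lt (by have := hvallt i; omega)
  -- build the longer cycle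
  apply hmax
  refine ⟨fun i => if i.val = 1 then u else V ((i.val - 1 : ℕ) : ZMod ℓ), ?_,
    fun i => if i.val = 0 then e1 else if i.val = 1 then e2
      else H ((i.val - 1 : ℕ) : ZMod ℓ), ?_, ?_⟩
  · -- injectivity of the vertex map
    intro a b hab
    simp only at hab
    by_cases ha : a.val = 1 <;> by_cases hb : b.val = 1
    · exact hvaleq a b (ha.trans hb.symm)
    · rw [if_pos ha, if_neg hb] at hab; exact absurd hab (huV _)
    · rw [if_neg ha, if_pos hb] at hab; exact absurd hab.symm (huV _)
    · rw [if_neg ha, if_neg hb] at hab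
      have h1 := hVinj hab
      have h2 := castinj15 (ℓ := ℓ) (a := a.val - 1) (b := b.val - 1)
        (by have := hvallt a; omega) (by have := hvallt b; omega) h1
      exact hvaleq a b (by omega)
  · -- injectivity of the hyperedge map
    intro a b hab
    simp only at hab
    by_cases ha0 : a.val = 0 <;> by_cases hb0 : b.val = 0
    · exact hvaleq a b (ha0.trans hb0.symm)
    · rw [if_pos ha0, if_neg hb0] at hab
      by_cases hb1 : b.val = 1
      · rw [if_pos hb1] at hab; exact absurd hab he12
      · rw [if_neg hb1] at hab; exact absurd hab (he1H _)
    · rw [if_neg ha0, if_pos hb0] at hab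
      by_cases ha1 : a.val = 1
      · rw [if_pos ha1] at hab; exact absurd hab.symm he12
      · rw [if_neg ha1] at hab; exact absurd hab.symm (he1H _)
    · rw [if_neg ha0, if_neg hb0] at hab
      by_cases ha1 : a.val = 1 <;> by_cases hb1 : b.val = 1
      · exact hvaleq a b (ha1.trans hb1.symm)
      · rw [if_pos ha1, if_neg hb1] at hab; exact absurd hab (he2H _)
      · rw [if_neg ha1, if_pos hb1] at hab; exact absurd hab.symm (he2H _)
      · rw [if_neg ha1, if_neg hb1] at hab
        have h1 := hHinj hab
        have h2 := castinj15 (ℓ := ℓ) (a := a.val - 1) (b := b.val - 1)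
          (by have := hvallt a; omega) (by have := hvallt b; omega) h1
        exact hvaleq a b (by omega)
  · -- the cycle property
    intro i
    simp only
    by_cases h0 : i.val = 0
    · have hi1 : (i + 1).val = 1 := by rw [hsucc, if_neg (by omega)]; omega
      rw [if_pos h0, if_neg (by omega : ¬ i.val = 1), if_pos hi1]
      have hc0 : ((i.val - 1 : ℕ) : ZMod ℓ) = 0 := by rw [h0]; norm_num
      rw [hc0]
      exact ⟨⟨hcard1, hblue1⟩, by simp [he1def], hue1⟩
    · by_cases h1 : i.val = 1
      · have hi2 : (i + 1).val = 2 := by rw [hsucc, if_neg (by omega)]; omega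
        rw [if_neg h0, if_pos h1, if_pos h1, if_neg (by omega : ¬ (i+1).val = 1)]
        have hc2 : (((i + 1).val - 1 : ℕ) : ZMod ℓ) = 1 := by rw [hi2]; norm_num
        rw [hc2]
        exact ⟨⟨hcard2, hblue2⟩, hue2, by simp [he2def]⟩
      · rw [if_neg h0, if_neg h1, if_neg h1]
        obtain ⟨hc1, hc2, hc3, hc4⟩ := hC ((i.val - 1 : ℕ) : ZMod ℓ)
        refine ⟨⟨hc1, hc2⟩, hc3, ?_⟩
        by_cases hl : i.val = ℓ
        · have hi0 : (i + 1).val = 0 := by rw [hsucc, if_pos hl]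
          rw [if_neg (by omega : ¬ (i+1).val = 1), hi0]
          have : (((0 : ℕ) - 1 : ℕ) : ZMod ℓ) = ((i.val - 1 : ℕ) : ZMod ℓ) + 1 := by
            rw [hl]
            have h5 : (((ℓ - 1 : ℕ) : ZMod ℓ) + 1) = ((ℓ - 1 + 1 : ℕ) : ZMod ℓ) := by
              push_cast; ring
            rw [h5, show ℓ - 1 + 1 = ℓ from by omega, ZMod.natCast_self]
            simp
          rw [this]
          exact hc4
        · have hik : (i + 1).val = i.val + 1 := by rw [hsucc, if_neg hl]
          rw [if_neg (by omega : ¬ (i+1).val = 1), hik]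
          have : ((i.val + 1 - 1 : ℕ) : ZMod ℓ) = ((i.val - 1 : ℕ) : ZMod ℓ) + 1 := by
            have h5 : (((i.val - 1 : ℕ) : ZMod ℓ) + 1) = ((i.val - 1 + 1 : ℕ) : ZMod ℓ) := by
              push_cast; ring
            rw [h5, show i.val - 1 + 1 = i.val + 1 - 1 from by omega]
          rw [this]
          exact hc4
end

section
/- Suppose the hyperedges of the complete 3-uniform hypergraph on n+1 ≥ 7 vertices are 3-colored red, blue, green such that the green hypergraph contains no Berge triangle. If u, v are vertices such that every hyperedge containing {u,v} except at most two is green (i.e., the pair {u,v} has list exactly {green} in the 2-multiplicity shadow graph), then for every other vertex v', the pair {u,v'} is contained in at most one green hyperedge. -/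
lemma Finset.exists_third_of_card_eq_three {α : Type*} [DecidableEq α] {s : Finset α}
    (hs : s.card = 3) {a b : α} (hab : a ≠ b) (ha : a ∈ s) (hb : b ∈ s) :
    ∃ c, c ≠ a ∧ c ≠ b ∧ s = {a, b, c} := by
  have hsub : {a, b} ⊆ s := by simp [Finset.insert_subset_iff, ha, hb]
  obtain ⟨c, hc⟩ : ∃ c, s \ {a, b} = {c} := by
    rw [← Finset.card_eq_one, Finset.card_sdiff_of_subset hsub, hs, Finset.card_pair hab]
  have hcs : c ∈ s \ {a, b} := hc ▸ Finset.mem_singleton_self c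
  simp only [Finset.mem_sdiff, Finset.mem_insert, Finset.mem_singleton, not_or] at hcs
  refine ⟨c, hcs.2.1, hcs.2.2, ?_⟩
  rw [← Finset.union_sdiff_of_subset hsub, hc]
  ext; simp

lemma card_filter_insert_pair_le {α : Type*} [Fintype α] [DecidableEq α]
    {u v : α} (huv : u ≠ v) (P : Finset α → Prop) [DecidablePred P] :
    (Finset.univ.filter fun x => x ≠ u ∧ x ≠ v ∧ P {u, v, x}).card ≤
      (Finset.univ.filter fun s : Finset α => s.card = 3 ∧ u ∈ s ∧ v ∈ s ∧ P s).card := by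
  refine Finset.card_le_card_of_injOn (fun x => {u, v, x}) ?_ ?_
  · intro x hx
    simp only [Finset.mem_coe, Finset.mem_filter, Finset.mem_univ, true_and] at hx ⊢
    exact ⟨Finset.card_eq_three.mpr ⟨u, v, x, huv, hx.1.symm, hx.2.1.symm, rfl⟩,
      by simp, by simp, hx.2.2⟩
  · intro x hx y _ hxy
    simp only [Finset.mem_coe, Finset.mem_filter, Finset.mem_univ, true_and] at hx
    have : x ∈ ({u, v, y} : Finset α) := by
      rw [← show ({u, v, x} : Finset α) = {u, v, y} from hxy]; simp
    simpa [hx.1, hx.2.1] using this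

section BergeTriangle

variable {N : ℕ} {E : Finset (Fin N) → Prop}

lemma bergeCycle_three {a b c : Fin N} (hab : a ≠ b) (hbc : b ≠ c) (hca : c ≠ a)
    {A B C : Finset (Fin N)} (hAB : A ≠ B) (hBC : B ≠ C) (hCA : C ≠ A)
    (hA : E A) (hB : E B) (hC : E C)
    (haA : a ∈ A) (hbA : b ∈ A) (hbB : b ∈ B) (hcB : c ∈ B)
    (hcC : c ∈ C) (haC : a ∈ C) : BergeCycle N 3 E := by
  refine ⟨![a, b, c], ?_, ![A, B, C], ?_, ?_⟩
  · intro i j h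
    fin_cases i <;> fin_cases j <;> first | rfl | simp_all [eq_comm]
  · intro i j h
    fin_cases i <;> fin_cases j <;> first | rfl | simp_all [eq_comm]
  · intro i
    fin_cases i
    exacts [⟨hA, haA, hbA⟩, ⟨hB, hbB, hcB⟩, ⟨hC, hcC, haC⟩]

lemma mem_of_not_bergeCycle_three (hfree : ¬ BergeCycle N 3 E) {a b c : Fin N}
    (hab : a ≠ b) (hbc : b ≠ c) (hca : c ≠ a)
    {A B C : Finset (Fin N)} (hAB : A ≠ B) (hA : E A) (hB : E B) (hC : E C)
    (haA : a ∈ A) (hbA : b ∈ A) (hbB : b ∈ B) (hcB : c ∈ B)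
    (hcC : c ∈ C) (haC : a ∈ C) : b ∈ C := by
  by_contra hbC
  exact hfree (bergeCycle_three hab hbc hca hAB (ne_of_mem_of_not_mem' hbB hbC)
    (ne_of_mem_of_not_mem' hbA hbC).symm hA hB hC haA hbA hbB hcB hcC haC)

lemma third_mem_of_edges_through_pair (hfree : ¬ BergeCycle N 3 E) {u v v' y w w' : Fin N}
    {B : Finset (Fin N)} (hgreen : ∀ x, x ≠ u → x ≠ v → x ∉ B → E {u, v, x})
    (hv'u : v' ≠ u) (hv'v : v' ≠ v) (hyu : y ≠ u) (hyv : y ≠ v) (hyv' : y ≠ v') (hyB : y ∉ B)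
    (hwu : w ≠ u) (hwv' : w ≠ v') (hww' : w ≠ w') (hw : E {u, v', w}) (hw' : E {u, v', w'}) :
    w ≠ v ∧ w ∈ B := by
  have hne : ({u, v', w'} : Finset (Fin N)) ≠ {u, v', w} :=
    (ne_of_mem_of_not_mem' (a := w) (by simp) (by simp [hwu, hwv', hww'])).symm
  have hv'_mem {C : Finset (Fin N)} (hC : E C) (huC : u ∈ C) (hwC : w ∈ C) : v' ∈ C :=
    mem_of_not_bergeCycle_three hfree hv'u.symm hwv'.symm hwu hne hw' hw hC
      (by simp) (by simp) (by simp) (by simp) hwC huC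
  have hwv : w ≠ v := by
    rintro rfl
    simpa [hv'u, hv'v, Ne.symm hyv'] using hv'_mem (hgreen y hyu hyv hyB) (by simp) (by simp)
  refine ⟨hwv, by_contra fun hwB => ?_⟩
  simpa [hv'u, hv'v, Ne.symm hwv'] using hv'_mem (hgreen w hwu hwv hwB) (by simp) (by simp)

lemma third_eq_of_edges_through_pair (hfree : ¬ BergeCycle N 3 E) {u v v' y w₁ w₂ : Fin N}
    {B : Finset (Fin N)} (hB : B.card ≤ 2) (hgreen : ∀ x, x ≠ u → x ≠ v → x ∉ B → E {u, v, x})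
    (huv : u ≠ v) (hv'u : v' ≠ u) (hv'v : v' ≠ v)
    (hyu : y ≠ u) (hyv : y ≠ v) (hyv' : y ≠ v') (hyB : y ∉ B)
    (hw₁u : w₁ ≠ u) (hw₁v' : w₁ ≠ v') (hw₂u : w₂ ≠ u) (hw₂v' : w₂ ≠ v')
    (hw₁ : E {u, v', w₁}) (hw₂ : E {u, v', w₂}) : w₁ = w₂ := by
  by_contra hw
  obtain ⟨hw₁v, hw₁B⟩ := third_mem_of_edges_through_pair hfree hgreen hv'u hv'v hyu hyv hyv' hyB
    hw₁u hw₁v' hw hw₁ hw₂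
  obtain ⟨-, hw₂B⟩ := third_mem_of_edges_through_pair hfree hgreen hv'u hv'v hyu hyv hyv' hyB
    hw₂u hw₂v' (Ne.symm hw) hw₂ hw₁
  have hv'B : v' ∉ B := fun h =>
    (Finset.two_lt_card.mpr ⟨w₁, hw₁B, w₂, hw₂B, v', h, hw, hw₁v', hw₂v'⟩).not_ge hB
  have hne : ({u, v', w₁} : Finset (Fin N)) ≠ {u, v, v'} :=
    (ne_of_mem_of_not_mem' (a := v) (by simp) (by simp [huv.symm, hv'v.symm, hw₁v.symm])).symm
  have := mem_of_not_bergeCycle_three hfree hv'u.symm hv'v huv.symm hne hw₁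
    (hgreen v' hv'u hv'v hv'B) (hgreen y hyu hyv hyB) (by simp) (by simp) (by simp) (by simp)
    (by simp) (by simp)
  simp [hv'u, hv'v, Ne.symm hyv'] at this

end BergeTriangle

/-- Claim 1(ii): in a 3-coloring (green = 2) of the complete 3-uniform
hypergraph on n+1 ≥ 7 vertices whose green part has no Berge triangle, if all
but at most two of the triples containing {u,v} are green, then every pair
{u,v'} with v' ∉ {u,v} lies in at most one green triple. -/
theorem stmt18 {n : ℕ} (hn : 6 ≤ n) (c : Finset (Fin (n + 1)) → Fin 3)
    (hfree : ¬ BergeCycle (n + 1) 3 (fun s => s.card = 3 ∧ c s = 2))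
    (u v : Fin (n + 1)) (huv : u ≠ v)
    (hmost : (Finset.univ.filter (fun s : Finset (Fin (n + 1)) =>
      s.card = 3 ∧ u ∈ s ∧ v ∈ s ∧ c s ≠ 2)).card ≤ 2) :
    ∀ v' : Fin (n + 1), v' ≠ u → v' ≠ v →
      (Finset.univ.filter (fun s : Finset (Fin (n + 1)) =>
        s.card = 3 ∧ u ∈ s ∧ v' ∈ s ∧ c s = 2)).card ≤ 1 := by
  intro v' hv'u hv'v
  set B := Finset.univ.filter fun x => x ≠ u ∧ x ≠ v ∧ c {u, v, x} ≠ 2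
  have hB : B.card ≤ 2 := (card_filter_insert_pair_le huv _).trans hmost
  have hgreen : ∀ x, x ≠ u → x ≠ v → x ∉ B → ({u, v, x} : Finset _).card = 3 ∧ c {u, v, x} = 2 :=
    fun x hxu hxv hxB => ⟨Finset.card_eq_three.mpr ⟨u, v, x, huv, hxu.symm, hxv.symm, rfl⟩,
      by by_contra h; exact hxB (by simp [B, hxu, hxv, h])⟩
  obtain ⟨y, -, hy⟩ : ∃ y ∈ Finset.univ, y ∉ {u, v, v'} ∪ B := by
    refine Finset.exists_mem_notMem_of_card_lt_card ?_
    grw [Finset.card_union_le, Finset.card_le_three, hB, Finset.card_univ, Fintype.card_fin]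
    omega
  simp only [Finset.mem_union, Finset.mem_insert, Finset.mem_singleton, not_or] at hy
  obtain ⟨⟨hyu, hyv, hyv'⟩, hyB⟩ := hy
  refine Finset.card_le_one.mpr fun e₁ he₁ e₂ he₂ => ?_
  simp only [Finset.mem_filter, Finset.mem_univ, true_and] at he₁ he₂
  obtain ⟨w₁, hw₁u, hw₁v', rfl⟩ :=
    Finset.exists_third_of_card_eq_three he₁.1 hv'u.symm he₁.2.1 he₁.2.2.1
  obtain ⟨w₂, hw₂u, hw₂v', rfl⟩ :=
    Finset.exists_third_of_card_eq_three he₂.1 hv'u.symm he₂.2.1 he₂.2.2.1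
  rw [third_eq_of_edges_through_pair hfree hB hgreen huv hv'u hv'v hyu hyv hyv' hyB
    hw₁u hw₁v' hw₂u hw₂v' ⟨he₁.1, he₁.2.2.2⟩ ⟨he₂.1, he₂.2.2.2⟩]
end
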